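/- arXiv:2007.03267 — 3 statements merged into one kernel-verified Lean document; each statement's English description precedes it below -/
import Mathlib

section
/- For all complex t, q with |t| < 1 and |q| < 1, the infinite product ∏_{j≥0} (1 - t q^j) equals the sum ∑_{k≥0} (-1)^k q^(k(k-1)/2) t^k / ((1-q)(1-q^2)···(1-q^k)). -/
set_option maxHeartbeats 1000000

open Filter Topology Finset

namespace EulerQPoch

/-- The coefficient `a_k = (-1)^k q^(k(k-1)/2) / (q;q)_k`. -/
noncomputable def EA (q : ℂ) (k : ℕ) : ℂ :=
  (-1) ^ k * q ^ (k * (k - 1) / 2) / ∏ j ∈ Finset.range k, (1 - q ^ (j + 1))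

lemma tri_succ (k : ℕ) : (k + 1) * k / 2 = k * (k - 1) / 2 + k := by
  have h : (k + 1) * ((k + 1) - 1) / 2 = k * (k - 1) / 2 + k := by
    rw [← Finset.sum_range_id, ← Finset.sum_range_id, Finset.sum_range_succ]
  simpa using h

lemma one_sub_pow_ne {q : ℂ} (hq : ‖q‖ < 1) {m : ℕ} (hm : 1 ≤ m) : 1 - q ^ m ≠ 0 := by
  intro h
  have h1 : q ^ m = 1 := by linear_combination -h
  have : ‖q ^ m‖ < 1 := by
    rw [norm_pow]
    calc ‖q‖ ^ m ≤ ‖q‖ ^ 1 := pow_le_pow_of_le_one (norm_nonneg q) hq.le hm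
    _ < 1 := by simpa using hq
  rw [h1] at this; simp at this

lemma prod_ne {q : ℂ} (hq : ‖q‖ < 1) (k : ℕ) :
    ∏ j ∈ Finset.range k, (1 - q ^ (j + 1)) ≠ 0 :=
  Finset.prod_ne_zero_iff.2 fun j _ => one_sub_pow_ne hq (Nat.le_add_left 1 j)

lemma EA_zero (q : ℂ) : EA q 0 = 1 := by simp [EA]

/-- The recurrence `a_{k+1} (1 - q^{k+1}) = - a_k q^k`. -/
lemma EA_rec {q : ℂ} (hq : ‖q‖ < 1) (k : ℕ) :
    EA q (k + 1) * (1 - q ^ (k + 1)) = -(EA q k * q ^ k) := by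
  unfold EA
  rw [Finset.prod_range_succ]
  have h1 : (k + 1) * ((k + 1) - 1) / 2 = k * (k - 1) / 2 + k := by
    simpa using tri_succ k
  rw [h1, pow_add]
  have h2 := prod_ne hq k
  have h3 : 1 - q ^ (k + 1) ≠ 0 := one_sub_pow_ne hq (Nat.le_add_left 1 k)
  field_simp
  ring

lemma norm_one_sub_pow_ge {q : ℂ} (hq : ‖q‖ < 1) (m : ℕ) (hm : 1 ≤ m) :
    1 - ‖q‖ ≤ ‖1 - q ^ m‖ := by
  have h1 : ‖q ^ m‖ ≤ ‖q‖ := by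
    rw [norm_pow]
    calc ‖q‖ ^ m ≤ ‖q‖ ^ 1 := pow_le_pow_of_le_one (norm_nonneg q) hq.le hm
    _ = ‖q‖ := pow_one _
  calc 1 - ‖q‖ ≤ 1 - ‖q ^ m‖ := by linarith
  _ = ‖(1 : ℂ)‖ - ‖q ^ m‖ := by simp
  _ ≤ ‖1 - q ^ m‖ := norm_sub_norm_le _ _

/-- Summability of the series, for any `s`. -/
lemma summ {q : ℂ} (hq : ‖q‖ < 1) (s : ℂ) : Summable (fun k => EA q k * s ^ k) := by
  apply summable_of_ratio_norm_eventually_le (r := 1 / 2) (by norm_num)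
  have hten : Tendsto (fun k : ℕ => ‖q‖ ^ k * ‖s‖) atTop (𝓝 0) := by
    simpa using (tendsto_pow_atTop_nhds_zero_of_norm_lt_one
      (x := ‖q‖) (by simpa using hq)).mul_const ‖s‖
  have hev : ∀ᶠ k : ℕ in atTop, ‖q‖ ^ k * ‖s‖ ≤ (1 - ‖q‖) * (1 / 2) := by
    have hpos : 0 < (1 - ‖q‖) * (1 / 2) := by
      have := norm_nonneg q; nlinarith
    exact (hten.eventually (eventually_le_nhds hpos)).mono fun k hk => hk
  filter_upwards [hev] with k hk
  have h3 : 1 - q ^ (k + 1) ≠ 0 := one_sub_pow_ne hq (Nat.le_add_left 1 k)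
  have hrec : EA q (k + 1) = -(EA q k * q ^ k) / (1 - q ^ (k + 1)) := by
    field_simp
    linear_combination EA_rec hq k
  have hnorm : ‖EA q (k+1) * s ^ (k+1)‖ * ‖1 - q ^ (k+1)‖
      = ‖EA q k * s ^ k‖ * (‖q‖ ^ k * ‖s‖) := by
    rw [← norm_mul]
    have : EA q (k+1) * s ^ (k+1) * (1 - q ^ (k+1))
        = -(EA q k * s ^ k * (q ^ k * s)) := by
      rw [pow_succ]
      linear_combination s ^ k * s * EA_rec hq k
    rw [this, norm_neg]
    simp [norm_mul, norm_pow]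
  have hq1 : 1 - ‖q‖ ≤ ‖1 - q ^ (k+1)‖ := norm_one_sub_pow_ge hq (k+1) (Nat.le_add_left 1 k)
  have hq0 : (0:ℝ) < 1 - ‖q‖ := by linarith
  have hEk : (0:ℝ) ≤ ‖EA q k * s ^ k‖ := norm_nonneg _
  have hpos : (0:ℝ) < ‖1 - q ^ (k+1)‖ := lt_of_lt_of_le hq0 hq1
  have h5 : ‖EA q k * s ^ k‖ * (‖q‖ ^ k * ‖s‖)
      ≤ ‖EA q k * s ^ k‖ * ((1 - ‖q‖) * (1/2)) := mul_le_mul_of_nonneg_left hk hEk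
  nlinarith [hnorm, h5, mul_le_mul_of_nonneg_left hq1 (by positivity : (0:ℝ) ≤ 1/2 * ‖EA q k * s ^ k‖), norm_nonneg (EA q (k+1) * s ^ (k+1))]

/-- Functional equation `S(s) = (1-s) S(sq)`. -/
lemma feq {q : ℂ} (hq : ‖q‖ < 1) (s : ℂ) :
    (∑' k : ℕ, EA q k * s ^ k) = (1 - s) * ∑' k : ℕ, EA q k * (s * q) ^ k := by
  have hs : Summable (fun k => EA q k * s ^ k) := summ hq s
  have hsq : Summable (fun k => EA q k * (s * q) ^ k) := summ hq (s * q)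
  have hsq1 : Summable (fun k => EA q (k + 1) * (s * q) ^ (k + 1)) :=
    (summable_nat_add_iff 1).2 hsq
  have hsqs : Summable (fun k => EA q k * (s * q) ^ k * s) := hsq.mul_right s
  have hterm : ∀ k : ℕ, EA q (k + 1) * s ^ (k + 1)
      = EA q (k + 1) * (s * q) ^ (k + 1) - EA q k * (s * q) ^ k * s := by
    intro k
    have := EA_rec hq k
    rw [mul_pow, mul_pow]
    linear_combination s ^ (k + 1) * this
  calc (∑' k : ℕ, EA q k * s ^ k)
      = EA q 0 * s ^ 0 + ∑' k : ℕ, EA q (k + 1) * s ^ (k + 1) := Summable.tsum_eq_zero_add hs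
    _ = EA q 0 * s ^ 0 + ∑' k : ℕ, (EA q (k + 1) * (s * q) ^ (k + 1)
          - EA q k * (s * q) ^ k * s) := by rw [tsum_congr hterm]
    _ = EA q 0 * s ^ 0 + ((∑' k : ℕ, EA q (k + 1) * (s * q) ^ (k + 1))
          - ∑' k : ℕ, EA q k * (s * q) ^ k * s) := by rw [Summable.tsum_sub hsq1 hsqs]
    _ = (1 - s) * ∑' k : ℕ, EA q k * (s * q) ^ k := by
        rw [tsum_mul_right, Summable.tsum_eq_zero_add hsq, EA_zero]
        ring

/-- Iterated functional equation. -/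
lemma iter {q : ℂ} (hq : ‖q‖ < 1) (t : ℂ) (n : ℕ) :
    (∑' k : ℕ, EA q k * t ^ k)
      = (∏ j ∈ Finset.range n, (1 - t * q ^ j)) * ∑' k : ℕ, EA q k * (t * q ^ n) ^ k := by
  induction n with
  | zero => simp
  | succ n ih =>
    rw [ih, feq hq (t * q ^ n), Finset.prod_range_succ]
    have h : (∑' k : ℕ, EA q k * (t * q ^ n * q) ^ k)
        = ∑' k : ℕ, EA q k * (t * q ^ (n + 1)) ^ k :=
      tsum_congr fun k => by rw [pow_succ]; ring
    rw [h]; ring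

end EulerQPoch

open EulerQPoch Filter Topology Finset in
/-- Euler's identity: `(t;q)_∞ = ∑_k (-1)^k q^(k(k-1)/2) t^k / (q;q)_k` for `|t|,|q| < 1`. -/
theorem euler_qPochhammer_expansion (t q : ℂ) (ht : ‖t‖ < 1) (hq : ‖q‖ < 1) :
    (∏' j : ℕ, (1 - t * q ^ j)) =
      ∑' k : ℕ, (-1) ^ k * q ^ (k * (k - 1) / 2) * t ^ k /
        ∏ j ∈ Finset.range k, (1 - q ^ (j + 1)) := by
  -- rewrite RHS as the series with coefficients EA
  have hrhs : (∑' k : ℕ, (-1) ^ k * q ^ (k * (k - 1) / 2) * t ^ k /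
        ∏ j ∈ Finset.range k, (1 - q ^ (j + 1))) = ∑' k : ℕ, EA q k * t ^ k := by
    refine tsum_congr fun k => ?_
    rw [EA, div_mul_eq_mul_div]
  rw [hrhs]
  -- nonvanishing of factors
  have hfac : ∀ j : ℕ, (1 : ℂ) - t * q ^ j ≠ 0 := by
    intro j h
    have h1 : t * q ^ j = 1 := by linear_combination -h
    have : ‖t * q ^ j‖ < 1 := by
      rw [norm_mul, norm_pow]
      calc ‖t‖ * ‖q‖ ^ j ≤ ‖t‖ * 1 := by
            apply mul_le_mul_of_nonneg_left (pow_le_one₀ (norm_nonneg q) hq.le) (norm_nonneg t)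
        _ < 1 := by simpa using ht
    rw [h1] at this; simp at this
  -- summability of logs: gives HasProd
  have hlog : Summable (fun j : ℕ => Complex.log (1 - t * q ^ j)) := by
    have hC : (0:ℝ) ≤ ‖t‖ * (‖t‖ * (1 - ‖t‖)⁻¹ / 2 + 1) := by
      have h1 : (0:ℝ) ≤ (1 - ‖t‖)⁻¹ := by
        apply inv_nonneg.2; linarith
      positivity
    apply Summable.of_norm_bounded
      (g := fun j : ℕ => ‖t‖ * (‖t‖ * (1 - ‖t‖)⁻¹ / 2 + 1) * ‖q‖ ^ j)
      (Summable.mul_left _ (summable_geometric_of_lt_one (norm_nonneg q) hq))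
    intro j
    have hzk : ‖-(t * q ^ j)‖ ≤ ‖t‖ * ‖q‖ ^ j := by
      rw [norm_neg, norm_mul, norm_pow]
    have hzt : ‖-(t * q ^ j)‖ ≤ ‖t‖ := by
      refine hzk.trans ?_
      calc ‖t‖ * ‖q‖ ^ j ≤ ‖t‖ * 1 :=
            mul_le_mul_of_nonneg_left (pow_le_one₀ (norm_nonneg q) hq.le) (norm_nonneg t)
        _ = ‖t‖ := mul_one _
    have hz1 : ‖-(t * q ^ j)‖ < 1 := lt_of_le_of_lt hzt ht
    have hb := Complex.norm_log_one_add_le hz1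
    have heq : (1 : ℂ) + -(t * q ^ j) = 1 - t * q ^ j := by ring
    rw [heq] at hb
    refine hb.trans ?_
    set x := ‖-(t * q ^ j)‖ with hx
    have hx0 : 0 ≤ x := norm_nonneg _
    have hinv : (1 - x)⁻¹ ≤ (1 - ‖t‖)⁻¹ := by
      apply inv_anti₀ (by linarith) (by linarith)
    calc x ^ 2 * (1 - x)⁻¹ / 2 + x
        ≤ x * ‖t‖ * (1 - ‖t‖)⁻¹ / 2 + x := by
          have h2 : x ^ 2 * (1 - x)⁻¹ ≤ x * ‖t‖ * (1 - ‖t‖)⁻¹ := by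
            apply mul_le_mul _ hinv (inv_nonneg.2 (by linarith)) (by positivity)
            rw [sq]; exact mul_le_mul_of_nonneg_left hzt hx0
          linarith
      _ = x * (‖t‖ * (1 - ‖t‖)⁻¹ / 2 + 1) := by ring
      _ ≤ (‖t‖ * ‖q‖ ^ j) * (‖t‖ * (1 - ‖t‖)⁻¹ / 2 + 1) := by
          apply mul_le_mul_of_nonneg_right hzk
          have h1 : (0:ℝ) ≤ (1 - ‖t‖)⁻¹ := by apply inv_nonneg.2; linarith
          positivity
      _ = ‖t‖ * (‖t‖ * (1 - ‖t‖)⁻¹ / 2 + 1) * ‖q‖ ^ j := by ring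
  have hprod : HasProd (fun j : ℕ => 1 - t * q ^ j)
      (Complex.exp (∑' j : ℕ, Complex.log (1 - t * q ^ j))) := by
    have h := hlog.hasSum.cexp
    exact h.congr_fun fun j => (Complex.exp_log (hfac j)).symm
  set F := Complex.exp (∑' j : ℕ, Complex.log (1 - t * q ^ j)) with hF
  -- partial products tend to F
  have hP : Tendsto (fun n => ∏ j ∈ Finset.range n, (1 - t * q ^ j)) atTop (𝓝 F) :=
    hprod.tendsto_prod_nat
  -- S(t q^n) → 1 by Tannery
  have hS : Tendsto (fun n => ∑' k : ℕ, EA q k * (t * q ^ n) ^ k) atTop (𝓝 1) := by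
    have key : Tendsto (fun n => ∑' k : ℕ, EA q k * (t * q ^ n) ^ k) atTop
        (𝓝 (∑' k : ℕ, if k = 0 then (1:ℂ) else 0)) := by
      apply tendsto_tsum_of_dominated_convergence (bound := fun k => ‖EA q k * t ^ k‖)
      · exact (summ hq t).norm
      · intro k
        rcases Nat.eq_zero_or_pos k with hk | hk
        · subst hk
          simpa [EA_zero] using tendsto_const_nhds (α := ℕ) (f := atTop) (a := (1:ℂ))
        · have hk0 : k ≠ 0 := hk.ne'
          simp only [hk0, if_false]
          have h1 : Tendsto (fun n : ℕ => (q ^ k) ^ n) atTop (𝓝 0) := by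
            apply tendsto_pow_atTop_nhds_zero_of_norm_lt_one
            rw [norm_pow]
            calc ‖q‖ ^ k ≤ ‖q‖ ^ 1 := pow_le_pow_of_le_one (norm_nonneg q) hq.le hk
              _ < 1 := by simpa using hq
          have h2 : Tendsto (fun n : ℕ => EA q k * t ^ k * (q ^ k) ^ n) atTop (𝓝 0) := by
            simpa using h1.const_mul (EA q k * t ^ k)
          refine h2.congr fun n => ?_
          rw [mul_pow, ← pow_mul, ← pow_mul, Nat.mul_comm n k]
          ring
      · filter_upwards with n
        intro k
        rw [norm_mul, norm_mul, mul_pow, norm_mul]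
        have : ‖(q ^ n) ^ k‖ ≤ 1 := by
          rw [norm_pow, norm_pow]
          exact pow_le_one₀ (pow_nonneg (norm_nonneg q) n) (pow_le_one₀ (norm_nonneg q) hq.le)
        calc ‖EA q k‖ * (‖t ^ k‖ * ‖(q ^ n) ^ k‖)
            ≤ ‖EA q k‖ * (‖t ^ k‖ * 1) := by
              apply mul_le_mul_of_nonneg_left _ (norm_nonneg _)
              exact mul_le_mul_of_nonneg_left this (norm_nonneg _)
          _ = ‖EA q k‖ * ‖t ^ k‖ := by ring
    simpa [tsum_ite_eq] using key
  -- combine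
  have hconst : Tendsto (fun n : ℕ =>
      (∏ j ∈ Finset.range n, (1 - t * q ^ j)) * ∑' k : ℕ, EA q k * (t * q ^ n) ^ k)
      atTop (𝓝 (F * 1)) := hP.mul hS
  have hconst2 : (fun n : ℕ =>
      (∏ j ∈ Finset.range n, (1 - t * q ^ j)) * ∑' k : ℕ, EA q k * (t * q ^ n) ^ k)
      = fun _ => ∑' k : ℕ, EA q k * t ^ k := by
    funext n; exact (iter hq t n).symm
  rw [hconst2] at hconst
  have hSF : (∑' k : ℕ, EA q k * t ^ k) = F * 1 :=
    tendsto_nhds_unique tendsto_const_nhds hconst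
  rw [hprod.tprod_eq, hSF, mul_one]
end

section
/- For all complex t, q with |t| < 1 and |q| < 1, 1/∏_{j≥0}(1 - t q^j) = ∑_{k≥0} t^k / ((1-q)(1-q^2)···(1-q^k)). -/
/-!
Let `F(s) = ∑ₖ sᵏ / (q;q)ₖ`, a power series of radius at least `1` by the ratio test. Comparing
coefficients gives `(1 - s) F(s) = F(qs)`, and iterating, `(t;q)ₙ F(t) = F(tqⁿ)`. As `n → ∞` the
left side tends to `(t;q)_∞ F(t)` and the right side to `F(0) = 1` by continuity of `F` at `0`.
-/

open Finset Filter Topology FormalMultilinearSeries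

section

variable {R : Type*} [CommRing R]

/-- The finite `q`-Pochhammer symbol `(a; q)ₙ`. -/
def qPochhammer (a q : R) (n : ℕ) : R := ∏ j ∈ range n, (1 - a * q ^ j)

lemma qPochhammer_succ (a q : R) (n : ℕ) :
    qPochhammer a q (n + 1) = qPochhammer a q n * (1 - a * q ^ n) :=
  prod_range_succ _ _

lemma qPochhammer_self (q : R) (n : ℕ) :
    qPochhammer q q n = ∏ j ∈ range n, (1 - q ^ (j + 1)) := by
  simp only [qPochhammer, pow_succ']

end

section

variable {𝕜 : Type*} [NontriviallyNormedField 𝕜]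

lemma norm_mul_pow_le {a q : 𝕜} (hq : ‖q‖ ≤ 1) (j : ℕ) : ‖a * q ^ j‖ ≤ ‖a‖ := by
  rw [norm_mul, norm_pow]
  exact mul_le_of_le_one_right (norm_nonneg a) (pow_le_one₀ (norm_nonneg q) hq)

lemma one_sub_ne_zero_of_norm_lt_one {x : 𝕜} (hx : ‖x‖ < 1) : 1 - x ≠ 0 := by
  rw [sub_ne_zero]
  rintro rfl
  simp at hx

lemma qPochhammer_ne_zero {a q : 𝕜} (ha : ‖a‖ < 1) (hq : ‖q‖ ≤ 1) (n : ℕ) :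
    qPochhammer a q n ≠ 0 :=
  prod_ne_zero_iff.2 fun j _ =>
    one_sub_ne_zero_of_norm_lt_one ((norm_mul_pow_le hq j).trans_lt ha)

lemma multipliable_one_sub_mul_pow {q : 𝕜} [CompleteSpace 𝕜] (hq : ‖q‖ < 1) (a : 𝕜) :
    Multipliable fun j => 1 - a * q ^ j := by
  simp_rw [sub_eq_add_neg]
  refine multipliable_one_add_of_summable ?_
  simp_rw [norm_neg, norm_mul, norm_pow]
  exact (summable_geometric_of_lt_one (norm_nonneg q) hq).mul_left _

noncomputable def eulerSeries (q : 𝕜) : FormalMultilinearSeries 𝕜 𝕜 𝕜 :=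
  ofScalars 𝕜 fun k => (qPochhammer q q k)⁻¹

lemma eulerSeries_sum_eq (q s : 𝕜) :
    (eulerSeries q).sum s = ∑' k, s ^ k / qPochhammer q q k := by
  refine (ofScalars_sum_eq _ s).trans (tsum_congr fun k => ?_)
  rw [smul_eq_mul, div_eq_inv_mul]

lemma eulerSeries_sum_zero (q : 𝕜) : (eulerSeries q).sum 0 = 1 := by
  change ofScalarsSum _ (0 : 𝕜) = 1
  simp [ofScalarsSum_zero, qPochhammer]

lemma one_le_radius_eulerSeries {q : 𝕜} (hq : ‖q‖ < 1) : 1 ≤ (eulerSeries q).radius := by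
  have hratio : Tendsto (fun k => ‖(qPochhammer q q (k + 1))⁻¹‖ / ‖(qPochhammer q q k)⁻¹‖)
      atTop (𝓝 1) := by
    have hfac : Tendsto (fun k => 1 - q * q ^ k) atTop (𝓝 1) := by
      simpa using ((tendsto_pow_atTop_nhds_zero_of_norm_lt_one hq).const_mul q).const_sub 1
    have := (hfac.norm.inv₀ (by simp))
    simp only [norm_one, inv_one] at this
    refine this.congr fun k => ?_
    rw [qPochhammer_succ, norm_inv, norm_inv, norm_mul,
      inv_div_inv, div_mul_cancel_left₀ (norm_ne_zero_iff.2 (qPochhammer_ne_zero hq hq.le k))]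
  unfold eulerSeries
  simpa using inv_le_ofScalars_radius_of_tendsto 𝕜 _ one_ne_zero (by simpa using hratio)

variable [CompleteSpace 𝕜] {q : 𝕜}

lemma hasSum_eulerSeries (hq : ‖q‖ < 1) {s : 𝕜} (hs : ‖s‖ < 1) :
    HasSum (fun k => s ^ k / qPochhammer q q k) ((eulerSeries q).sum s) := by
  have hmem : s ∈ Metric.eball (0 : 𝕜) (eulerSeries q).radius :=
    lt_of_lt_of_le (by simpa [edist_zero_right, ← ofReal_norm] using hs)
      (one_le_radius_eulerSeries hq)
  have hsum := (eulerSeries q).hasSum hmem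
  unfold eulerSeries at hsum ⊢
  simpa only [ofScalars_apply_eq, smul_eq_mul, div_eq_inv_mul] using hsum

lemma continuousAt_eulerSeries_sum (hq : ‖q‖ < 1) : ContinuousAt (eulerSeries q).sum 0 :=
  ((eulerSeries q).hasFPowerSeriesOnBall
    (zero_lt_one.trans_le (one_le_radius_eulerSeries hq))).hasFPowerSeriesAt.continuousAt

lemma one_sub_mul_eulerSeries_sum (hq : ‖q‖ < 1) {s : 𝕜} (hs : ‖s‖ < 1) :
    (1 - s) * (eulerSeries q).sum s = (eulerSeries q).sum (s * q) := by
  have hsq : ‖s * q‖ < 1 := by simpa using (norm_mul_pow_le hq.le 1).trans_lt hs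
  have hcoeff : ∀ k : ℕ, s ^ (k + 1) / qPochhammer q q (k + 1) - s * (s ^ k / qPochhammer q q k)
      = (s * q) ^ (k + 1) / qPochhammer q q (k + 1) := fun k => by
    have hD := qPochhammer_ne_zero hq hq.le k
    have hfac := one_sub_ne_zero_of_norm_lt_one ((norm_mul_pow_le hq.le k).trans_lt hq)
    rw [qPochhammer_succ]
    field_simp
    ring
  have hS := hasSum_eulerSeries hq hs
  have hshift := ((hasSum_nat_add_iff' 1).2 hS).sub (hS.mul_left s)
  simp_rw [hcoeff] at hshift
  have hT := (hasSum_nat_add_iff' 1).2 (hasSum_eulerSeries hq hsq)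
  have := hshift.unique hT
  simp only [range_one, sum_singleton, pow_zero, qPochhammer, range_zero, prod_empty] at this
  linear_combination this

lemma qPochhammer_mul_eulerSeries_sum (hq : ‖q‖ < 1) {t : 𝕜} (ht : ‖t‖ < 1) (n : ℕ) :
    qPochhammer t q n * (eulerSeries q).sum t = (eulerSeries q).sum (t * q ^ n) := by
  induction n with
  | zero => simp [qPochhammer]
  | succ n ih =>
    rw [qPochhammer_succ, mul_right_comm, ih, mul_comm,
      one_sub_mul_eulerSeries_sum hq ((norm_mul_pow_le hq.le n).trans_lt ht), pow_succ, mul_assoc]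

end

/-- Euler's identity: `1/(t;q)_∞ = ∑_k t^k / (q;q)_k` for `|t|,|q| < 1`. -/
theorem euler_inv_qPochhammer_expansion (t q : ℂ) (ht : ‖t‖ < 1) (hq : ‖q‖ < 1) :
    (∏' j : ℕ, (1 - t * q ^ j))⁻¹ =
      ∑' k : ℕ, t ^ k / ∏ j ∈ Finset.range k, (1 - q ^ (j + 1)) := by
  have hpartial : Tendsto (fun n => qPochhammer t q n * (eulerSeries q).sum t) atTop
      (𝓝 ((∏' j : ℕ, (1 - t * q ^ j)) * (eulerSeries q).sum t)) :=
    (multipliable_one_sub_mul_pow hq t).hasProd.tendsto_prod_nat.mul_const _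
  have hlimit : Tendsto (fun n => qPochhammer t q n * (eulerSeries q).sum t) atTop (𝓝 1) := by
    simp_rw [qPochhammer_mul_eulerSeries_sum hq ht, ← eulerSeries_sum_zero q]
    refine (continuousAt_eulerSeries_sum hq).tendsto.comp ?_
    simpa using (tendsto_pow_atTop_nhds_zero_of_norm_lt_one hq).const_mul t
  simp_rw [← qPochhammer_self, ← eulerSeries_sum_eq]
  exact inv_eq_of_mul_eq_one_right (tendsto_nhds_unique hpartial hlimit)
end

section
/- For all x, θ with x = cos θ, and all n ≥ 0, sup over |x| ≤ 1 of |h_n(x|q)| is bounded by s_n(1|q) = ∑_{k=0}^n [n choose k]_q, when 0 ≤ q < 1. -/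
/-- The Gaussian (q-)binomial coefficient over ℝ, defined via the q-Pascal rule. -/
def gaussBinomR (q : ℝ) : ℕ → ℕ → ℝ
  | _, 0 => 1
  | 0, _ + 1 => 0
  | n + 1, k + 1 => gaussBinomR q n k + q ^ (k + 1) * gaussBinomR q n (k + 1)

/-- The continuous q-Hermite polynomials over ℝ. -/
def qHermiteR (q x : ℝ) : ℕ → ℝ
  | 0 => 1
  | 1 => 2 * x
  | n + 2 => 2 * x * qHermiteR q x (n + 1) - (1 - q ^ (n + 1)) * qHermiteR q x n

lemma gauss_zero_right (q : ℝ) (n : ℕ) : gaussBinomR q n 0 = 1 := by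
  cases n <;> rfl

lemma gauss_eq_zero (q : ℝ) : ∀ n k, n < k → gaussBinomR q n k = 0 := by
  intro n
  induction n with
  | zero =>
    intro k hk
    match k, hk with
    | (k+1), _ => rfl
  | succ n ih =>
    intro k hk
    match k, hk with
    | (k+1), hk =>
      show gaussBinomR q n k + q ^ (k + 1) * gaussBinomR q n (k + 1) = 0
      rw [ih k (by omega), ih (k+1) (by omega)]
      ring

lemma gauss_nonneg (q : ℝ) (hq : 0 ≤ q) : ∀ n k, 0 ≤ gaussBinomR q n k := by
  intro n
  induction n with
  | zero =>
    intro k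
    cases k with
    | zero => norm_num [gaussBinomR]
    | succ k => norm_num [gaussBinomR]
  | succ n ih =>
    intro k
    cases k with
    | zero => norm_num [gaussBinomR]
    | succ k =>
      show 0 ≤ gaussBinomR q n k + q ^ (k + 1) * gaussBinomR q n (k + 1)
      have := ih k
      have := ih (k+1)
      positivity

lemma gauss_B (q : ℝ) : ∀ n k,
    (1 - q ^ (k+1)) * gaussBinomR q n (k+1) = (1 - q ^ (n - k)) * gaussBinomR q n k := by
  intro n
  induction n with
  | zero =>
    intro k
    rw [gauss_eq_zero q 0 (k+1) (by omega), Nat.zero_sub]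
    ring
  | succ n ih =>
    intro k
    cases k with
    | zero =>
      have h := ih 0
      rw [Nat.sub_zero] at h ⊢
      rw [gauss_zero_right] at h ⊢
      show (1 - q ^ 1) * (gaussBinomR q n 0 + q ^ (0+1) * gaussBinomR q n (0+1)) = (1 - q ^ (n+1)) * 1
      rw [gauss_zero_right]
      linear_combination q * h
    | succ j =>
      have h1 := ih (j+1)
      have h2 := ih j
      show (1 - q ^ (j+2)) * (gaussBinomR q n (j+1) + q ^ (j+2) * gaussBinomR q n (j+2)) =
        (1 - q ^ (n + 1 - (j+1))) * (gaussBinomR q n j + q ^ (j+1) * gaussBinomR q n (j+1))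
      by_cases hj : j < n
      · obtain ⟨a, ha⟩ : ∃ a, n - j = a + 1 := ⟨n - j - 1, by omega⟩
        have e1 : n - (j+1) = a := by omega
        have e2 : n + 1 - (j+1) = a + 1 := by omega
        rw [e1] at h1
        rw [ha] at h2
        rw [e2]
        linear_combination q ^ (j+2) * h1 + h2
      · have z1 : gaussBinomR q n (j+1) = 0 := gauss_eq_zero q n (j+1) (by omega)
        have z2 : gaussBinomR q n (j+2) = 0 := gauss_eq_zero q n (j+2) (by omega)
        rw [z1, z2]
        have z3 : n + 1 - (j + 1) = 0 := by omega
        rw [z3]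
        ring

lemma gauss_A (q : ℝ) (n k : ℕ) :
    (1 - q ^ (k+1)) * gaussBinomR q (n+1) (k+1) = (1 - q ^ (n+1)) * gaussBinomR q n k := by
  have hB := gauss_B q n k
  show (1 - q ^ (k+1)) * (gaussBinomR q n k + q ^ (k+1) * gaussBinomR q n (k+1)) =
    (1 - q ^ (n+1)) * gaussBinomR q n k
  by_cases hk : k ≤ n
  · obtain ⟨a, rfl⟩ : ∃ a, n = k + a := ⟨n - k, by omega⟩
    have e : k + a - k = a := by omega
    rw [e] at hB
    linear_combination q ^ (k+1) * hB
  · have z1 : gaussBinomR q n k = 0 := gauss_eq_zero q n k (by omega)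
    have z2 : gaussBinomR q n (k+1) = 0 := gauss_eq_zero q n (k+1) (by omega)
    rw [z1, z2]
    ring

lemma gauss_key (q : ℝ) (n k : ℕ) :
    gaussBinomR q (n+2) (k+1) + (1 - q ^ (n+1)) * gaussBinomR q n k =
      gaussBinomR q (n+1) (k+1) + gaussBinomR q (n+1) k := by
  have hA := gauss_A q n k
  show gaussBinomR q (n+1) k + q ^ (k+1) * gaussBinomR q (n+1) (k+1) + (1 - q ^ (n+1)) * gaussBinomR q n k =
      gaussBinomR q (n+1) (k+1) + gaussBinomR q (n+1) k
  linear_combination -hA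

lemma cos_rec (θ y : ℝ) :
    2 * Real.cos θ * Real.cos y = Real.cos (y + θ) + Real.cos (y - θ) := by
  rw [Real.cos_add, Real.cos_sub]; ring

noncomputable def tcos (θ : ℝ) (m : ℕ) (k : ℕ) : ℝ :=
  Real.cos ((((m:ℝ) + 2) - 2 * k) * θ)

lemma qHermite_rep (q θ : ℝ) (n : ℕ) :
    qHermiteR q (Real.cos θ) n =
      ∑ k ∈ Finset.range (n+1), gaussBinomR q n k * Real.cos (((n : ℝ) - 2 * k) * θ) := by
  have main : ∀ m : ℕ,
      (qHermiteR q (Real.cos θ) m =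
        ∑ k ∈ Finset.range (m+1), gaussBinomR q m k * Real.cos (((m : ℝ) - 2 * k) * θ)) ∧
      (qHermiteR q (Real.cos θ) (m+1) =
        ∑ k ∈ Finset.range (m+1+1), gaussBinomR q (m+1) k * Real.cos ((((m+1 : ℕ) : ℝ) - 2 * k) * θ)) := by
    intro m
    induction m with
    | zero =>
      constructor
      · simp [qHermiteR, gaussBinomR]
      · show 2 * Real.cos θ = _
        rw [Finset.sum_range_succ, Finset.sum_range_one]
        have g10 : gaussBinomR q 1 0 = 1 := rfl
        have g11 : gaussBinomR q 1 1 = 1 := by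
          show gaussBinomR q 0 0 + q ^ (0+1) * gaussBinomR q 0 (0+1) = 1
          norm_num [gaussBinomR]
        rw [g10, g11]
        push_cast
        rw [show ((1:ℝ) - 2 * 0) * θ = θ by ring,
            show ((1:ℝ) - 2 * 1) * θ = -θ by ring, Real.cos_neg]
        ring
    | succ m ih =>
      refine ⟨ih.2, ?_⟩
      have hx : qHermiteR q (Real.cos θ) (m+2)
          = 2 * Real.cos θ * qHermiteR q (Real.cos θ) (m+1)
            - (1 - q^(m+1)) * qHermiteR q (Real.cos θ) m := rfl
      rw [hx, ih.1, ih.2, Finset.mul_sum, Finset.mul_sum]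
      have hsplit : ∑ k ∈ Finset.range (m+1+1),
            2 * Real.cos θ * (gaussBinomR q (m+1) k * Real.cos ((((m+1 : ℕ) : ℝ) - 2*k) * θ))
          = ∑ k ∈ Finset.range (m+2),
            (gaussBinomR q (m+1) k * tcos θ m k + gaussBinomR q (m+1) k * tcos θ m (k+1)) := by
        refine Finset.sum_congr rfl (fun k _ => ?_)
        have hc := cos_rec θ ((((m+1 : ℕ) : ℝ) - 2*k) * θ)
        rw [show (((m+1 : ℕ) : ℝ) - 2*k) * θ + θ = (((m:ℝ) + 2) - 2 * k) * θ by push_cast; ring,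
            show (((m+1 : ℕ) : ℝ) - 2*k) * θ - θ = (((m:ℝ) + 2) - 2 * ((k+1 : ℕ) : ℝ)) * θ by push_cast; ring] at hc
        unfold tcos
        push_cast at hc ⊢
        linear_combination gaussBinomR q (m+1) k * hc
      rw [hsplit]
      have hsecond : ∑ k ∈ Finset.range (m+1),
            (1 - q^(m+1)) * (gaussBinomR q m k * Real.cos (((m:ℝ) - 2*k) * θ))
          = ∑ k ∈ Finset.range (m+1), (1 - q^(m+1)) * gaussBinomR q m k * tcos θ m (k+1) := by
        refine Finset.sum_congr rfl (fun k _ => ?_)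
        unfold tcos
        rw [show (((m:ℝ) + 2) - 2 * ((k+1 : ℕ) : ℝ)) * θ = ((m:ℝ) - 2*k) * θ by push_cast; ring]
        ring
      rw [hsecond]
      show _ = ∑ k ∈ Finset.range (m+3),
          gaussBinomR q (m+2) k * Real.cos ((((m+2 : ℕ) : ℝ) - 2 * k) * θ)
      have hrhs : ∑ k ∈ Finset.range (m+3),
            gaussBinomR q (m+2) k * Real.cos ((((m+2 : ℕ) : ℝ) - 2 * k) * θ)
          = ∑ k ∈ Finset.range (m+3), gaussBinomR q (m+2) k * tcos θ m k := by
        refine Finset.sum_congr rfl (fun k _ => ?_)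
        unfold tcos
        rw [show (((m+2 : ℕ) : ℝ) - 2*k) * θ = (((m:ℝ) + 2) - 2*(k:ℕ)) * θ by push_cast; ring]
      rw [hrhs]
      rw [Finset.sum_add_distrib]
      rw [Finset.sum_range_succ' (fun k => gaussBinomR q (m+1) k * tcos θ m k) (m+1)]
      rw [Finset.sum_range_succ' (fun k => gaussBinomR q (m+2) k * tcos θ m k) (m+2)]
      simp only [gauss_zero_right]
      have ext1 : ∑ k ∈ Finset.range (m+2), gaussBinomR q (m+1) (k+1) * tcos θ m (k+1)
          = (∑ k ∈ Finset.range (m+1), gaussBinomR q (m+1) (k+1) * tcos θ m (k+1))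
            + gaussBinomR q (m+1) (m+1+1) * tcos θ m (m+1+1) := Finset.sum_range_succ _ _
      have ext2 : ∑ k ∈ Finset.range (m+2), (1 - q^(m+1)) * gaussBinomR q m k * tcos θ m (k+1)
          = (∑ k ∈ Finset.range (m+1), (1 - q^(m+1)) * gaussBinomR q m k * tcos θ m (k+1))
            + (1 - q^(m+1)) * gaussBinomR q m (m+1) * tcos θ m (m+1+1) := Finset.sum_range_succ _ _
      have z1 : gaussBinomR q (m+1) (m+1+1) = 0 := gauss_eq_zero q (m+1) (m+2) (by omega)
      have z2 : gaussBinomR q m (m+1) = 0 := gauss_eq_zero q m (m+1) (by omega)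
      rw [z1] at ext1; rw [z2] at ext2
      have hkey : ∑ k ∈ Finset.range (m+2),
            (gaussBinomR q (m+1) k * tcos θ m (k+1) + gaussBinomR q (m+1) (k+1) * tcos θ m (k+1)
              - (1 - q^(m+1)) * gaussBinomR q m k * tcos θ m (k+1))
          = ∑ k ∈ Finset.range (m+2), gaussBinomR q (m+2) (k+1) * tcos θ m (k+1) := by
        refine Finset.sum_congr rfl (fun k _ => ?_)
        linear_combination - tcos θ m (k+1) * gauss_key q m k
      rw [Finset.sum_sub_distrib, Finset.sum_add_distrib] at hkey
      rw [ext1, ext2] at hkey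
      linarith [hkey]
  exact (main n).1

/-- For `0 ≤ q < 1` and `|x| ≤ 1`, `|h_n(x|q)| ≤ s_n(1|q) = ∑_{k=0}^n [n choose k]_q`. -/
theorem qHermite_bounded (q : ℝ) (hq0 : 0 ≤ q) (hq1 : q < 1)
    (x : ℝ) (hx : |x| ≤ 1) (n : ℕ) :
    |qHermiteR q x n| ≤ ∑ k ∈ Finset.range (n + 1), gaussBinomR q n k := by
  obtain ⟨hx1, hx2⟩ := abs_le.mp hx
  have hce : Real.cos (Real.arccos x) = x := Real.cos_arccos hx1 hx2
  have h := qHermite_rep q (Real.arccos x) n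
  rw [hce] at h
  rw [h]
  calc |∑ k ∈ Finset.range (n+1),
          gaussBinomR q n k * Real.cos (((n : ℝ) - 2 * k) * Real.arccos x)|
      ≤ ∑ k ∈ Finset.range (n+1),
          |gaussBinomR q n k * Real.cos (((n : ℝ) - 2 * k) * Real.arccos x)| :=
        Finset.abs_sum_le_sum_abs _ _
    _ ≤ ∑ k ∈ Finset.range (n+1), gaussBinomR q n k := by
        refine Finset.sum_le_sum fun k _ => ?_
        rw [abs_mul, abs_of_nonneg (gauss_nonneg q hq0 n k)]
        exact mul_le_of_le_one_right (gauss_nonneg q hq0 n k) (Real.abs_cos_le_one _)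
end
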